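/- arXiv:2503.07542 — 3 statements merged into one kernel-verified Lean document; each statement's English description precedes it below -/
import Mathlib

section
/- Let R be a commutative ring, Φ = (Φ₁, …, Φ_a) : R^{a+r} → R^a an R-linear map, and u : R^m → R^m an R-linear isomorphism with component functionals u₁, …, u_m. Let Φ′ := Φ ⊕ u : R^{a+r} ⊕ R^m → R^a ⊕ R^m, regarded as a map R^{(a+m)+r} → R^{a+m} with component functionals (Φ₁, …, Φ_a, u₁, …, u_m), each extended by zero to the complementary summand. Then ker Φ′ = ker Φ under the canonical inclusion R^{a+r} ⊆ R^{a+r} ⊕ R^m, and 𝛅_r(Φ′) = 𝛅_r(Φ) as submodules of ∩^r_R ker Φ; in particular, the module of leading terms is unchanged when the presentation is stabilized by an isomorphism direct summand. -/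
/-!  Common definitions: exterior biduals and modules of leading terms
(following Büyükboduk–Cooper–Sakamoto and Das–Pal). -/

noncomputable section

open Module ExteriorAlgebra

namespace Paper

variable (R : Type*) [CommRing R]

/-- The `t`-th exterior bidual `∩^t_R M := (⋀^t_R M*)*`. -/
abbrev ExtBid (M : Type*) [AddCommGroup M] [Module R M] (t : ℕ) : Type _ :=
  Module.Dual R (⋀[R]^t (Module.Dual R M))

/-- Left wedge multiplication by a fixed element of `⋀^u M`:
`⋀^v M → ⋀^(u+v) M`, `x ↦ φ ∧ x`. -/
noncomputable def wedgeL {M : Type*} [AddCommGroup M] [Module R M] {u : ℕ} (φ : ⋀[R]^u M) (v : ℕ) :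
    (⋀[R]^v M) →ₗ[R] (⋀[R]^(u + v) M) :=
  LinearMap.restrict (LinearMap.mulLeft R (φ : ExteriorAlgebra R M))
    (p := ⋀[R]^v M) (q := ⋀[R]^(u+v) M)
    (fun x hx => by
      have h := Submodule.mul_mem_mul φ.2 hx
      rwa [← pow_add] at h)

/-- The alternating map `(M*)^t → R`, `(φ₁, …, φ_t) ↦ det (φ i (x j))`,
for a fixed family `x : Fin t → M`. -/
noncomputable def detAlt {M : Type*} [AddCommGroup M] [Module R M] {t : ℕ} (x : Fin t → M) :
    (Module.Dual R M) [⋀^Fin t]→ₗ[R] R :=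
  (Matrix.detRowAlternating).compLinearMap
    (LinearMap.pi fun j => Module.Dual.eval R M (x j))

/-- The linear map `⋀^t M → N` induced by an alternating map `M^t → N`
(the universal property of the exterior power). -/
noncomputable def liftPow {M N : Type*} [AddCommGroup M] [Module R M] [AddCommGroup N] [Module R N]
    (t : ℕ) (f : M [⋀^Fin t]→ₗ[R] N) : (⋀[R]^t M) →ₗ[R] N :=
  (ExteriorAlgebra.liftAlternating
      (Function.update (0 : ∀ i, M [⋀^Fin i]→ₗ[R] N) t f)) ∘ₗ (⋀[R]^t M).subtype

/-- The canonical image of `x₁ ∧ ⋯ ∧ x_t` in the exterior bidual `∩^t M`, namely the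
functional `φ₁ ∧ ⋯ ∧ φ_t ↦ det (φ i (x j))` on `⋀^t M*`. -/
noncomputable def dualPair {M : Type*} [AddCommGroup M] [Module R M] {t : ℕ} (x : Fin t → M) :
    ExtBid R M t :=
  liftPow R t (detAlt R x)

/-- `x₁ ∧ ⋯ ∧ x_n` as an element of the `n`-th exterior power. -/
noncomputable def wedge {M : Type*} [AddCommGroup M] [Module R M] {n : ℕ} (x : Fin n → M) : ⋀[R]^n M :=
  ⟨ExteriorAlgebra.ιMulti R n x, ExteriorAlgebra.ιMulti_range R n (Set.mem_range_self _)⟩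

/-- The canonical isomorphism `⋀^1 M → M`. -/
noncomputable def ofOne (M : Type*) [AddCommGroup M] [Module R M] : (⋀[R]^1 M) →ₗ[R] M :=
  liftPow R 1 ((AlternatingMap.ofSubsingleton R M M (0 : Fin 1)) LinearMap.id)

/-- The canonical map `M → ∩^1 M = (⋀^1 M*)*` (the evaluation map composed with the
canonical identification `⋀^1 M* ≅ M*`);  it is an isomorphism when `M` is reflexive. -/
noncomputable def toBidOne (M : Type*) [AddCommGroup M] [Module R M] : M →ₗ[R] ExtBid R M 1 :=
  (ofOne R (Module.Dual R M)).dualMap ∘ₗ Module.Dual.eval R M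

/-- Functoriality of exterior powers. -/
noncomputable def powMap {M N : Type*} [AddCommGroup M] [Module R M] [AddCommGroup N] [Module R N]
    (n : ℕ) (f : M →ₗ[R] N) : (⋀[R]^n M) →ₗ[R] (⋀[R]^n N) :=
  LinearMap.restrict (ExteriorAlgebra.map f).toLinearMap
    (p := ⋀[R]^n M) (q := ⋀[R]^n N)
    (fun x hx => by
      have h1 : Submodule.map (ExteriorAlgebra.map f).toLinearMap
          (LinearMap.range (ExteriorAlgebra.ι R (M := M)) ^ n)
          ≤ LinearMap.range (ExteriorAlgebra.ι R (M := N)) ^ n := by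
        rw [Submodule.map_pow]
        refine pow_le_pow_left' ?_ n
        rintro y ⟨z, ⟨m, rfl⟩, rfl⟩
        exact ⟨f m, (ExteriorAlgebra.map_apply_ι f m).symm⟩
      exact h1 (Submodule.mem_map_of_mem hx))

/-- The functorial map `∩^t M → ∩^t N` induced by `f : M → N`. -/
noncomputable def bidMap {M N : Type*} [AddCommGroup M] [Module R M] [AddCommGroup N] [Module R N]
    (t : ℕ) (f : M →ₗ[R] N) : ExtBid R M t →ₗ[R] ExtBid R N t :=
  (powMap R t f.dualMap).dualMap

section LeadingTerms

variable (a r : ℕ)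

/-- The component functionals `Φ₁, …, Φ_a` of `Φ : R^(a+r) → R^a`. -/
noncomputable def comps (Φ : (Fin (a + r) → R) →ₗ[R] (Fin a → R)) :
    Fin a → Module.Dual R (Fin (a + r) → R) :=
  fun i => (LinearMap.proj i) ∘ₗ Φ

/-- The image `(Φ_a ∘ ⋯ ∘ Φ₁)(e₁ ∧ ⋯ ∧ e_(a+r))` of the standard generator of
`det (R^(a+r)) = ⋀^(a+r) R^(a+r)` under the composite contraction by the component
functionals of `Φ`, viewed in `∩^r R^(a+r)`:  it is the functional
`ψ ↦ (e₁ ∧ ⋯ ∧ e_(a+r)) (Φ₁ ∧ ⋯ ∧ Φ_a ∧ ψ)` on `⋀^r (R^(a+r))*`. -/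
noncomputable def lead (Φ : (Fin (a + r) → R) →ₗ[R] (Fin a → R)) : ExtBid R (Fin (a + r) → R) r :=
  (wedgeL R (wedge R (comps R a r Φ)) r).dualMap
    (dualPair R (fun i : Fin (a + r) => Pi.single i (1 : R)))

/-- The canonical map `∩^r (ker Φ) → ∩^r R^(a+r)` induced by the inclusion
`ker Φ ⊆ R^(a+r)`; it is injective in all situations considered here. -/
noncomputable def canKer (Φ : (Fin (a + r) → R) →ₗ[R] (Fin a → R)) :
    ExtBid R (LinearMap.ker Φ) r →ₗ[R] ExtBid R (Fin (a + r) → R) r :=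
  bidMap R r (LinearMap.ker Φ).subtype

/-- The module of leading terms `𝛅_r(Φ) ⊆ ∩^r (ker Φ)`: the cyclic submodule
corresponding to the span of `(Φ_a ∘ ⋯ ∘ Φ₁)(e₁ ∧ ⋯ ∧ e_(a+r))` under the canonical
(injective) map `∩^r (ker Φ) → ∩^r R^(a+r)`. -/
noncomputable def bbdelta (Φ : (Fin (a + r) → R) →ₗ[R] (Fin a → R)) :
    Submodule R (ExtBid R (LinearMap.ker Φ) r) :=
  Submodule.comap (canKer R a r Φ) (Submodule.span R {lead R a r Φ})

end LeadingTerms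

/-- Evaluation identifying `∩^0 M` with `R`. -/
noncomputable def evalZero (M : Type*) [AddCommGroup M] [Module R M] : ExtBid R M 0 →ₗ[R] R :=
  Module.Dual.eval R (⋀[R]^0 (Module.Dual R M)) (wedge R (Fin.elim0))

/-- For `Φ : R^a → R^a` (the case `r = 0`, with the convention `∩^0 = R`), the leading
term `(Φ_a ∘ ⋯ ∘ Φ₁)(e₁ ∧ ⋯ ∧ e_a) ∈ R`. -/
noncomputable def lead0 {a : ℕ} (Φ : (Fin a → R) →ₗ[R] (Fin a → R)) : R :=
  evalZero R (Fin a → R) (lead R a 0 Φ)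

/-- `𝛅_0(Φ) ⊆ R` for a square map `Φ : R^a → R^a`. -/
noncomputable def bbdelta0 {a : ℕ} (Φ : (Fin a → R) →ₗ[R] (Fin a → R)) : Ideal R :=
  Ideal.span {lead0 R Φ}

/-- `𝛅_1(Φ)` for `Φ : R^(a+1) → R^a` (the case `r = 1`), regarded as a submodule of
`K = ker Φ` via the canonical map `K → ∩^1 K = K**` (an isomorphism for reflexive `K`). -/
noncomputable def bbdeltaInK (a : ℕ) (Φ : (Fin (a + 1) → R) →ₗ[R] (Fin a → R)) :
    Submodule R (LinearMap.ker Φ) :=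
  Submodule.comap (toBidOne R (LinearMap.ker Φ)) (bbdelta R a 1 Φ)

/-- `𝛅_1(Φ) = {δ_φ : δ ∈ 𝛅_2(Φ), φ ∈ ⋀^1 K*}` for `Φ : R^(a+2) → R^a` (the case `r = 2`),
where `δ_φ (ψ) = δ (φ ∧ ψ)`, regarded as a submodule of `K = ker Φ` via the canonical map
`K → ∩^1 K = K**`. -/
noncomputable def bbdeltaOneOfTwo (a : ℕ) (Φ : (Fin (a + 2) → R) →ₗ[R] (Fin a → R)) :
    Submodule R (LinearMap.ker Φ) :=
  Submodule.comap (toBidOne R (LinearMap.ker Φ))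
    (Submodule.span R {x : ExtBid R (LinearMap.ker Φ) 1 |
      ∃ δ ∈ bbdelta R a 2 Φ, ∃ φ : ⋀[R]^1 (Module.Dual R (LinearMap.ker Φ)),
        x = δ ∘ₗ wedgeL R φ 1})

/-- The length of a module: the Krull dimension of its lattice of submodules. -/
noncomputable def mlen (R M : Type*) [Ring R] [AddCommGroup M] [Module R M] : WithBot ℕ∞ :=
  Order.krullDim (Submodule R M)

/-- The length over `R_P` of the localization `M_P` of `M` at a prime `P`. -/
noncomputable def locLen (P : Ideal R) [P.IsPrime] (M : Type*) [AddCommGroup M] [Module R M] :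
    WithBot ℕ∞ :=
  mlen (Localization P.primeCompl) (LocalizedModule P.primeCompl M)

/-- A height-one prime ideal of a domain: a minimal nonzero prime. -/
noncomputable def HeightOne (P : Ideal R) : Prop :=
  P ≠ ⊥ ∧ ∀ Q : Ideal R, Q.IsPrime → Q < P → Q = ⊥

/-- A local ring is regular if its maximal ideal can be generated by `dim R` elements
(this is the standard definition of a regular local ring for Noetherian local rings). -/
noncomputable def IsRegularLocal (R : Type*) [CommRing R] [IsLocalRing R] : Prop :=
  ∃ s : Finset R, Ideal.span (s : Set R) = IsLocalRing.maximalIdeal R ∧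
    (s.card : WithBot ℕ∞) = ringKrullDim R

/-- The `0`-th Fitting ideal of `coker Φ` for `Φ : R^b → R^a`:  the ideal generated by
the `a × a` minors of (a matrix representing) `Φ`. -/
noncomputable def fitt (a b : ℕ) (Φ : (Fin b → R) →ₗ[R] (Fin a → R)) : Ideal R :=
  Ideal.span {x | ∃ g : Fin a → Fin b, Function.Injective g ∧
    x = Matrix.det (Matrix.of fun i j => Φ (Pi.single (g j) (1 : R)) i)}

end Paper

namespace Paper

variable (R : Type*) [CommRing R]

/-- The identification `Fin ((a+m)+r) ≃ Fin (a+r) ⊕ Fin m` (first block of size `a+r`,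
second block of size `m`). -/
def blockEquiv (a r m : ℕ) : Fin ((a + m) + r) ≃ (Fin (a + r) ⊕ Fin m) :=
  (finCongr (by omega)).trans finSumFinEquiv.symm

/-- The stabilized map `Φ′ = Φ ⊕ u : R^((a+m)+r) → R^(a+m)`, whose component
functionals are `(Φ₁, …, Φ_a, u₁, …, u_m)`, each extended by zero to the
complementary summand. -/
noncomputable def stab (a r m : ℕ) (Φ : (Fin (a + r) → R) →ₗ[R] (Fin a → R))
    (u : (Fin m → R) ≃ₗ[R] (Fin m → R)) :
    (Fin ((a + m) + r) → R) →ₗ[R] (Fin (a + m) → R) :=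
  LinearMap.pi fun i =>
    Sum.elim
      (fun i₀ => (comps R a r Φ i₀) ∘ₗ
        LinearMap.funLeft R R fun j : Fin (a + r) => (blockEquiv a r m).symm (Sum.inl j))
      (fun i₁ => ((LinearMap.proj i₁) ∘ₗ u.toLinearMap) ∘ₗ
        LinearMap.funLeft R R fun j : Fin m => (blockEquiv a r m).symm (Sum.inr j))
      (finSumFinEquiv.symm i)

/-- The canonical inclusion `R^(a+r) ⊆ R^(a+r) ⊕ R^m = R^((a+m)+r)`
(extension by zero on the second block). -/
noncomputable def incl (a r m : ℕ) :
    (Fin (a + r) → R) →ₗ[R] (Fin ((a + m) + r) → R) :=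
  LinearMap.pi fun k =>
    Sum.elim (fun j => LinearMap.proj j) (fun _ => (0 : Module.Dual R (Fin (a + r) → R)))
      (blockEquiv a r m k)

end Paper

/-!
Since `u` is injective, a vector of `R^(a+r) ⊕ R^m` lies in `ker Φ′` exactly when its second
component vanishes and its first lies in `ker Φ`, so the inclusion identifies `ker Φ` with
`ker Φ′`.

Evaluated on `ψ₁ ∧ ⋯ ∧ ψ_r`, the leading term of `Φ` is the determinant of the endomorphism
`(Φ₁, …, Φ_a, ψ₁, …, ψ_r)` of `R^(a+r)`. For `Φ′`, moving the rows `u₁, …, u_m` to the bottom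
makes its matrix block upper triangular, with diagonal blocks the matrix for `Φ` (against the
restrictions of the `ψ_k` to `R^(a+r)`) and the matrix of `u`. Hence the leading term of `Φ′` is
the image of that of `Φ` times the unit `± det u`, and the two generate the same cyclic module.
-/

namespace Paper

variable (R : Type*) [CommRing R]

section ExteriorPowers

variable {M N P : Type*} [AddCommGroup M] [Module R M] [AddCommGroup N] [Module R N]
  [AddCommGroup P] [Module R P]

theorem powMap_eq_map (n : ℕ) (f : M →ₗ[R] N) : powMap R n f = exteriorPower.map n f := by
  ext x
  simp [powMap, Function.comp_def]

theorem bidMap_id (t : ℕ) : bidMap R t (LinearMap.id : M →ₗ[R] M) = LinearMap.id := by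
  simp [bidMap, powMap_eq_map, LinearMap.dualMap_id]

theorem bidMap_comp (t : ℕ) (f : M →ₗ[R] N) (g : N →ₗ[R] P) :
    bidMap R t (g ∘ₗ f) = bidMap R t g ∘ₗ bidMap R t f := by
  simp only [bidMap, powMap_eq_map, ← LinearMap.dualMap_comp_dualMap, exteriorPower.map_comp]

theorem bidMap_injective {f : M →ₗ[R] N} (g : N →ₗ[R] M) (hg : g ∘ₗ f = LinearMap.id) (t : ℕ) :
    Function.Injective (bidMap R t f) :=
  Function.LeftInverse.injective (g := bidMap R t g) fun X => by
    rw [← LinearMap.comp_apply, ← bidMap_comp, hg, bidMap_id, LinearMap.id_apply]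

def bidCongr (t : ℕ) (e : M ≃ₗ[R] N) : ExtBid R M t ≃ₗ[R] ExtBid R N t :=
  LinearEquiv.ofLinearMap (bidMap R t e) (bidMap R t e.symm)
    (by rw [← bidMap_comp, e.comp_symm, bidMap_id])
    (by rw [← bidMap_comp, e.symm_comp, bidMap_id])

theorem liftPow_wedge {t : ℕ} (f : M [⋀^Fin t]→ₗ[R] N) (x : Fin t → M) :
    liftPow R t f (wedge R x) = f x := by
  simp [liftPow, wedge]

theorem dualPair_wedge {t : ℕ} (x : Fin t → M) (f : Fin t → Module.Dual R M) :
    dualPair R x (wedge R f) = (Matrix.of fun i j => f i (x j)).det := by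
  simp only [dualPair, detAlt, Matrix.detRowAlternating, liftPow_wedge,
    AlternatingMap.compLinearMap_apply]
  rfl

theorem wedgeL_wedge {u v : ℕ} (x : Fin u → M) (y : Fin v → M) :
    wedgeL R (wedge R x) v (wedge R y) = wedge R (Fin.append x y) := by
  apply Subtype.ext
  change ιMulti R u x * ιMulti R v y = ιMulti R (u + v) (Fin.append x y)
  rw [ιMulti_apply, ιMulti_apply, ιMulti_apply, ← List.prod_append, ← List.ofFn_fin_append]
  congr 2
  funext i
  refine Fin.addCases (fun i => ?_) (fun i => ?_) i <;> simp

theorem bidMap_apply_wedge {t : ℕ} (f : M →ₗ[R] N) (X : ExtBid R M t)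
    (ψ : Fin t → Module.Dual R N) :
    bidMap R t f X (wedge R ψ) = X (wedge R (f.dualMap ∘ ψ)) := by
  change X (powMap R t f.dualMap (exteriorPower.ιMulti R t ψ)) = _
  rw [powMap_eq_map, exteriorPower.map_apply_ιMulti]
  rfl

theorem extBid_ext {t : ℕ} {X Y : ExtBid R M t}
    (h : ∀ ψ : Fin t → Module.Dual R M, X (wedge R ψ) = Y (wedge R ψ)) : X = Y :=
  exteriorPower.linearMap_ext (AlternatingMap.ext h)

end ExteriorPowers

theorem lead_wedge (a r : ℕ) (Φ : (Fin (a + r) → R) →ₗ[R] (Fin a → R))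
    (ψ : Fin r → Module.Dual R (Fin (a + r) → R)) :
    lead R a r Φ (wedge R ψ) = LinearMap.det (LinearMap.pi (Fin.append (comps R a r Φ) ψ)) := by
  change dualPair R _ (wedgeL R (wedge R (comps R a r Φ)) r (wedge R ψ)) = _
  rw [wedgeL_wedge, dualPair_wedge, ← LinearMap.det_toMatrix']
  rfl

theorem det_eq_sign_mul_det_mul_det_of_reindex {n α β : Type*} [Fintype n] [DecidableEq n]
    [Fintype α] [DecidableEq α] [Fintype β] [DecidableEq β]
    (B : Matrix n n R) (ρ σ : n ≃ α ⊕ β)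
    (h : ∀ i j, B (ρ.symm (Sum.inr i)) (σ.symm (Sum.inl j)) = 0) :
    B.det = Equiv.Perm.sign (σ.symm.trans ρ) *
      (B.submatrix (ρ.symm ∘ Sum.inl) (σ.symm ∘ Sum.inl)).det *
      (B.submatrix (ρ.symm ∘ Sum.inr) (σ.symm ∘ Sum.inr)).det := by
  set C := B.submatrix ρ.symm σ.symm
  have hC : C.toBlocks₂₁ = 0 := by
    ext i j
    exact h i j
  calc B.det = (B.submatrix σ.symm σ.symm).det := (Matrix.det_submatrix_equiv_self _ _).symm
    _ = (C.submatrix (σ.symm.trans ρ) id).det := by congr; ext; simp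
    _ = _ := by
      rw [Matrix.det_permute, ← Matrix.fromBlocks_toBlocks C, hC, Matrix.det_fromBlocks_zero₂₁,
        mul_assoc]
      rfl

theorem map_comap_eq_comap_map {X X' Y Y' : Type*} [AddCommGroup X] [Module R X]
    [AddCommGroup X'] [Module R X'] [AddCommGroup Y] [Module R Y] [AddCommGroup Y'] [Module R Y']
    (e : X ≃ₗ[R] X') {c : X →ₗ[R] Y} {c' : X' →ₗ[R] Y'} {F : Y →ₗ[R] Y'}
    (hF : Function.Injective F) (h : c' ∘ₗ e = F ∘ₗ c) (S : Submodule R Y) :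
    (S.comap c).map (e : X →ₗ[R] X') = (S.map F).comap c' := by
  have hc' : c' = F ∘ₗ c ∘ₗ e.symm := by
    rw [← LinearMap.comp_assoc, ← h, LinearMap.comp_assoc, e.comp_symm, LinearMap.comp_id]
  rw [Submodule.map_equiv_eq_comap_symm, hc', Submodule.comap_comp, Submodule.comap_comp,
    Submodule.comap_map_eq_of_injective hF]

/-- Moves the rows `u₁, …, u_m` of the matrix of `stab Φ u` behind the rows `ψ₁, …, ψ_r`. -/
def rowEquiv (a r m : ℕ) : Fin ((a + m) + r) ≃ (Fin (a + r) ⊕ Fin m) :=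
  finSumFinEquiv.symm.trans
    ((finSumFinEquiv.symm.sumCongr (Equiv.refl (Fin r))).trans
      ((Equiv.sumAssoc (Fin a) (Fin m) (Fin r)).trans
        (((Equiv.refl (Fin a)).sumCongr (Equiv.sumComm (Fin m) (Fin r))).trans
          ((Equiv.sumAssoc (Fin a) (Fin r) (Fin m)).symm.trans
            (finSumFinEquiv.sumCongr (Equiv.refl (Fin m)))))))

section Stabilization

variable {a r m : ℕ}

theorem rowEquiv_symm_inl_castAdd (i : Fin a) :
    (rowEquiv a r m).symm (Sum.inl (Fin.castAdd r i)) = Fin.castAdd r (Fin.castAdd m i) := by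
  simp [rowEquiv]

theorem rowEquiv_symm_inl_natAdd (k : Fin r) :
    (rowEquiv a r m).symm (Sum.inl (Fin.natAdd a k)) = Fin.natAdd (a + m) k := by
  simp [rowEquiv]

theorem rowEquiv_symm_inr (i : Fin m) :
    (rowEquiv a r m).symm (Sum.inr i) = Fin.castAdd r (Fin.natAdd a i) := by
  simp [rowEquiv]

variable (a r m)

theorem incl_apply (x : Fin (a + r) → R) :
    incl R a r m x = Sum.elim x 0 ∘ blockEquiv a r m := by
  ext k
  simp only [incl, LinearMap.pi_apply, Function.comp_apply]
  cases blockEquiv a r m k <;> rfl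

theorem funLeft_comp_incl :
    LinearMap.funLeft R R (fun j => (blockEquiv a r m).symm (Sum.inl j)) ∘ₗ incl R a r m =
      LinearMap.id := by
  refine LinearMap.ext fun x => funext fun j => ?_
  simp [incl_apply, LinearMap.funLeft]

theorem incl_injective : Function.Injective (incl R a r m) :=
  Function.LeftInverse.injective (g := LinearMap.funLeft R R _)
    (LinearMap.congr_fun (funLeft_comp_incl R a r m))

variable (Φ : (Fin (a + r) → R) →ₗ[R] (Fin a → R)) (u : (Fin m → R) ≃ₗ[R] (Fin m → R))

theorem stab_apply (x : Fin ((a + m) + r) → R) :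
    stab R a r m Φ u x = Fin.append (Φ fun j => x ((blockEquiv a r m).symm (Sum.inl j)))
      (u fun j => x ((blockEquiv a r m).symm (Sum.inr j))) := by
  ext i
  refine Fin.addCases (fun i => ?_) (fun i => ?_) i <;>
    simp [stab, comps, LinearMap.funLeft, Function.comp_def]

theorem stab_elim_comp (v : Fin (a + r) → R) (w : Fin m → R) :
    stab R a r m Φ u (Sum.elim v w ∘ blockEquiv a r m) = Fin.append (Φ v) (u w) := by
  simp [stab_apply]

theorem map_incl_ker :
    (LinearMap.ker Φ).map (incl R a r m) = LinearMap.ker (stab R a r m Φ u) := by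
  apply le_antisymm
  · rintro _ ⟨x, hx, rfl⟩
    rw [LinearMap.mem_ker, incl_apply, stab_elim_comp, LinearMap.mem_ker.mp hx, map_zero]
    ext i
    refine Fin.addCases (fun i => ?_) (fun i => ?_) i <;> simp
  · intro x hx
    have hx' := stab_apply R a r m Φ u x ▸ LinearMap.mem_ker.mp hx
    have hΦ : Φ (fun j => x ((blockEquiv a r m).symm (Sum.inl j))) = 0 :=
      funext fun i => by simpa using congrFun hx' (Fin.castAdd m i)
    have hu : (fun j => x ((blockEquiv a r m).symm (Sum.inr j))) = 0 :=
      u.map_eq_zero_iff.mp (funext fun i => by simpa using congrFun hx' (Fin.natAdd a i))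
    refine ⟨_, hΦ, funext fun k => ?_⟩
    obtain ⟨s, rfl⟩ := (blockEquiv a r m).symm.surjective k
    rw [incl_apply, Function.comp_apply, Equiv.apply_symm_apply]
    rcases s with j | j
    · rfl
    · exact (congrFun hu j).symm

open LinearMap in
theorem lead_stab :
    lead R (a + m) r (stab R a r m Φ u) =
      (Equiv.Perm.sign ((blockEquiv a r m).symm.trans (rowEquiv a r m)) *
        LinearMap.det (u : (Fin m → R) →ₗ[R] (Fin m → R))) •
        bidMap R r (incl R a r m) (lead R a r Φ) := by
  refine extBid_ext R fun ψ => ?_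
  set B := toMatrix' (pi (Fin.append (comps R (a + m) r (stab R a r m Φ u)) ψ))
  have hl : ∀ j, (Pi.single ((blockEquiv a r m).symm (Sum.inl j)) 1 : Fin ((a + m) + r) → R) =
      Sum.elim (Pi.single j 1) 0 ∘ blockEquiv a r m := fun j => by
    rw [Sum.elim_single_zero, Pi.single_comp_equiv]
  have hr : ∀ j, (Pi.single ((blockEquiv a r m).symm (Sum.inr j)) 1 : Fin ((a + m) + r) → R) =
      Sum.elim (0 : Fin (a + r) → R) (Pi.single j 1) ∘ blockEquiv a r m := fun j => by
    rw [Sum.elim_zero_single, Pi.single_comp_equiv]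
  have hA : B.submatrix ((rowEquiv a r m).symm ∘ Sum.inl) ((blockEquiv a r m).symm ∘ Sum.inl) =
      toMatrix' (pi (Fin.append (comps R a r Φ) ((incl R a r m).dualMap ∘ ψ))) := by
    ext i j
    simp only [B, Matrix.submatrix_apply, toMatrix'_apply, pi_apply, Function.comp_apply, hl]
    refine Fin.addCases (fun i => ?_) (fun k => ?_) i
    · simp only [rowEquiv_symm_inl_castAdd, Fin.append_left, comps, comp_apply, proj_apply,
        stab_elim_comp]
    · simp only [rowEquiv_symm_inl_natAdd, Fin.append_right, Function.comp_apply,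
        dualMap_apply, incl_apply]
  have h0 : ∀ i j,
      B ((rowEquiv a r m).symm (Sum.inr i)) ((blockEquiv a r m).symm (Sum.inl j)) = 0 :=
    fun i j => by
      simp only [B, toMatrix'_apply, pi_apply, hl, rowEquiv_symm_inr, Fin.append_left, comps,
        comp_apply, proj_apply, stab_elim_comp, Fin.append_right, map_zero, Pi.zero_apply]
  have hD : B.submatrix ((rowEquiv a r m).symm ∘ Sum.inr) ((blockEquiv a r m).symm ∘ Sum.inr) =
      toMatrix' (u : (Fin m → R) →ₗ[R] (Fin m → R)) := by
    ext i j
    simp only [B, Matrix.submatrix_apply, toMatrix'_apply, pi_apply, Function.comp_apply, hr,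
      rowEquiv_symm_inr, Fin.append_left, comps, comp_apply, proj_apply, stab_elim_comp,
      Fin.append_right, LinearEquiv.coe_coe]
  rw [lead_wedge, ← det_toMatrix', det_eq_sign_mul_det_mul_det_of_reindex R B _ _ h0, hA, hD,
    det_toMatrix', det_toMatrix', LinearMap.smul_apply, bidMap_apply_wedge, lead_wedge,
    smul_eq_mul]
  ring

end Stabilization

end Paper

open Paper in
theorem statement_1_general (R : Type*) [CommRing R] (a r m : ℕ)
    (Φ : (Fin (a + r) → R) →ₗ[R] (Fin a → R))
    (u : (Fin m → R) ≃ₗ[R] (Fin m → R))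
    (hker : ∀ x ∈ LinearMap.ker Φ, incl R a r m x ∈ LinearMap.ker (stab R a r m Φ u)) :
    Submodule.map (incl R a r m) (LinearMap.ker Φ) = LinearMap.ker (stab R a r m Φ u) ∧
    Submodule.map (bidMap R r ((incl R a r m).restrict hker)) (bbdelta R a r Φ) =
      bbdelta R (a + m) r (stab R a r m Φ u) := by
  have hK := map_incl_ker R a r m Φ u
  refine ⟨hK, ?_⟩
  let e := (Submodule.equivMapOfInjective _ (incl_injective R a r m) _).trans
    (LinearEquiv.ofEq _ _ hK)
  have he : bidMap R r ((incl R a r m).restrict hker) = bidCongr R r e := rfl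
  have hsquare : canKer R (a + m) r (stab R a r m Φ u) ∘ₗ (bidCongr R r e : _ →ₗ[R] _) =
      bidMap R r (incl R a r m) ∘ₗ canKer R a r Φ := by
    simp only [canKer, ← he, ← bidMap_comp]
    rfl
  have hunit := ((Equiv.Perm.sign ((blockEquiv a r m).symm.trans (rowEquiv a r m))).isUnit.map
    (Int.castRingHom R)).mul u.isUnit_det'
  have hspan : R ∙ lead R (a + m) r (stab R a r m Φ u) =
      R ∙ bidMap R r (incl R a r m) (lead R a r Φ) :=
    (congrArg (R ∙ ·) (lead_stab R a r m Φ u)).trans (Submodule.span_singleton_smul_eq hunit _)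
  rw [he, bbdelta, bbdelta, map_comap_eq_comap_map R _
      (bidMap_injective R _ (funLeft_comp_incl R a r m) r) hsquare,
    Submodule.map_span, Set.image_singleton]
  -- not `rw [hspan]`: matching it against the goal unfolds both leading terms
  exact congrArg _ hspan.symm

open Paper in
/-- Stabilizing a presentation `Φ : R^(a+r) → R^a` by an isomorphism
direct summand `u : R^m ≃ R^m` does not change the kernel (under the canonical
inclusion `R^(a+r) ⊆ R^(a+r) ⊕ R^m`) nor the module of leading terms `𝛅_r`. -/
theorem statement_1 (R : Type*) [CommRing R] (a r m : ℕ) (ha : 1 ≤ a)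
    (Φ : (Fin (a + r) → R) →ₗ[R] (Fin a → R))
    (u : (Fin m → R) ≃ₗ[R] (Fin m → R))
    (hker : ∀ x ∈ LinearMap.ker Φ, incl R a r m x ∈ LinearMap.ker (stab R a r m Φ u)) :
    Submodule.map (incl R a r m) (LinearMap.ker Φ) = LinearMap.ker (stab R a r m Φ u) ∧
    Submodule.map (bidMap R r ((incl R a r m).restrict hker)) (bbdelta R a r Φ) =
      bbdelta R (a + m) r (stab R a r m Φ u) :=
  statement_1_general R a r m Φ u hker
end
end

section
/- Let S be an Artinian commutative local ring that is injective as a module over itself (i.e. a zero-dimensional Gorenstein local ring), M a finitely generated S-module, and δ ∈ M* = Hom_S(M, S). Then the S-linear map Hom_S(Sδ, S) → S, φ ↦ φ(δ), is injective with image the ideal δ(M) = im(δ) ⊆ S; in particular there is a natural isomorphism (Sδ)* ≅ im(δ). -/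
/-!
Over a self-injective ring `S`, a functional on the submodule `Sδ ⊆ M*` extends to all of `M*`,
and for finitely generated `M` the evaluation map `M → M**` is onto: dualizing a surjection
`Sⁿ ↠ M` embeds `M*` into the reflexive module `(Sⁿ)*`, along which any element of `M**`
extends. Hence every `φ ∈ (Sδ)*` is evaluation at some `m ∈ M`, so `φ(δ) = δ(m) ∈ im(δ)`.
Injectivity of `φ ↦ φ(δ)` holds because `δ` generates `Sδ`.
-/

open Module

theorem Submodule.dual_eval_span_singleton_injective {R M : Type*} [CommSemiring R]
    [AddCommMonoid M] [Module R M] (x : M) :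
    Function.Injective fun φ : Dual R (span R {x}) => φ ⟨x, mem_span_singleton_self x⟩ := by
  intro φ₁ φ₂ h
  ext ⟨y, hy⟩
  obtain ⟨s, rfl⟩ := mem_span_singleton.mp hy
  have hsx : (⟨s • x, hy⟩ : span R {x}) = s • ⟨x, mem_span_singleton_self x⟩ := rfl
  simp only [hsx, map_smul, h]

section SelfInjective

variable {R M : Type*} [CommRing R] [Module.Injective R R] [AddCommGroup M] [Module R M]

theorem Module.Dual.eval_surjective_of_injective [Module.Finite R M] :
    Function.Surjective (Dual.eval R M) := by
  obtain ⟨n, π, hπ⟩ := Module.Finite.exists_fin' R M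
  intro ψ
  obtain ⟨H, hH⟩ := Module.Injective.extension_property R R (Dual R M) (Dual R (Fin n → R))
    π.dualMap (π.dualMap_injective_of_surjective hπ) ψ
  obtain ⟨v, rfl⟩ := (bijective_dual_eval R (Fin n → R)).surjective H
  exact ⟨π v, LinearMap.ext fun f => LinearMap.congr_fun hH f⟩

theorem Submodule.range_dual_eval_eq_range [Module.Finite R M] (N : Submodule R (Dual R M))
    {δ : Dual R M} (hδ : δ ∈ N) :
    Set.range (fun φ : Dual R N => φ ⟨δ, hδ⟩) = LinearMap.range δ := by
  ext s
  constructor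
  · rintro ⟨φ, rfl⟩
    obtain ⟨ψ, hψ⟩ :=
      Module.Injective.extension_property R R N (Dual R M) N.subtype N.injective_subtype φ
    obtain ⟨m, rfl⟩ := Dual.eval_surjective_of_injective ψ
    exact ⟨m, by rw [← hψ]; rfl⟩
  · rintro ⟨m, rfl⟩
    exact ⟨Dual.eval R M m ∘ₗ N.subtype, rfl⟩

end SelfInjective

theorem statement_4_general (S : Type*) [CommRing S]
    [Module.Injective S S]
    (M : Type*) [AddCommGroup M] [Module S M] [Module.Finite S M]
    (δ : Module.Dual S M) :
    Function.Injective (fun φ : Module.Dual S ↥(Submodule.span S {δ}) =>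
      φ ⟨δ, Submodule.mem_span_singleton_self δ⟩) ∧
    Set.range (fun φ : Module.Dual S ↥(Submodule.span S {δ}) =>
      φ ⟨δ, Submodule.mem_span_singleton_self δ⟩) = (LinearMap.range δ : Set S) :=
  ⟨Submodule.dual_eval_span_singleton_injective δ, Submodule.range_dual_eval_eq_range _ _⟩

/-- Over a zero-dimensional Gorenstein local ring `S` (an Artinian
commutative local ring that is injective as a module over itself), for a finitely
generated `S`-module `M` and `δ ∈ M* = Hom_S(M, S)`, the map
`Hom_S(Sδ, S) → S, φ ↦ φ(δ)` is injective with image the ideal `im(δ) = δ(M)`;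
in particular `(Sδ)* ≅ im(δ)`. -/
theorem statement_4 (S : Type*) [CommRing S] [IsArtinianRing S] [IsLocalRing S]
    [Module.Injective S S]
    (M : Type*) [AddCommGroup M] [Module S M] [Module.Finite S M]
    (δ : Module.Dual S M) :
    Function.Injective (fun φ : Module.Dual S ↥(Submodule.span S {δ}) =>
      φ ⟨δ, Submodule.mem_span_singleton_self δ⟩) ∧
    Set.range (fun φ : Module.Dual S ↥(Submodule.span S {δ}) =>
      φ ⟨δ, Submodule.mem_span_singleton_self δ⟩) = (LinearMap.range δ : Set S) :=
  statement_4_general S M δ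
end

section
/- Let R be a commutative Noetherian local ring, N a finite free R-module, and f : N → N an R-linear endomorphism such that coker f is a free R-module. Then ker f is a finite free R-module and a direct summand of N, and for every commutative R-algebra S the natural map (ker f) ⊗_R S → ker(f ⊗_R id_S : N ⊗_R S → N ⊗_R S) is an isomorphism. -/
/-!
As `coker f` is projective, `0 → range f → N → coker f → 0` splits, so `range f` is a direct
summand of `N`, hence projective; then `0 → ker f → N → range f → 0` splits as well. Thus `ker f`
is a finite projective module over the local ring `R`, hence free. After base change the
inclusion `range f ⊗ S → N ⊗ S` is still split injective, so right exactness of `⊗` identifies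
`ker (f ⊗ S)` with the image of the (still split injective) map `ker f ⊗ S → N ⊗ S`.
-/

open LinearMap Function

namespace Function.Exact

variable {R M N P : Type*} [Ring R] [AddCommGroup M] [AddCommGroup N] [AddCommGroup P]
  [Module R M] [Module R N] [Module R P] {i : M →ₗ[R] N} {g : N →ₗ[R] P}

theorem exists_leftInverse_of_projective [Module.Projective R P] (h : Exact i g)
    (hi : Injective i) (hg : Surjective g) : ∃ r : N →ₗ[R] M, r ∘ₗ i = LinearMap.id :=
  ((h.split_tfae hi hg).out 0 1).mp (g.exists_rightInverse_of_surjective (range_eq_top.mpr hg))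

end Function.Exact

theorem LinearMap.exact_subtype_ker_rangeRestrict {R M N : Type*} [Ring R] [AddCommGroup M]
    [AddCommGroup N] [Module R M] [Module R N] (f : M →ₗ[R] N) :
    Exact (ker f).subtype f.rangeRestrict :=
  (range f).injective_subtype.comp_exact_iff_exact.mp f.exact_subtype_ker_map

theorem LinearMap.bijective_codRestrict_ker_of_exact {R M N P : Type*} [Semiring R]
    [AddCommMonoid M] [AddCommMonoid N] [AddCommMonoid P] [Module R M] [Module R N] [Module R P]
    {i : M →ₗ[R] N} {g : N →ₗ[R] P} (h : Exact i g) (hi : Injective i) (hp : ∀ x, i x ∈ ker g) :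
    Bijective (codRestrict (ker g) i hp) :=
  ⟨(Set.injective_codRestrict hp).mpr hi, (Set.surjective_codRestrict hp).mpr <| by
    rw [← coe_range, h.linearMap_ker_eq]⟩

namespace LinearMap

variable {R M N : Type*} [CommRing R] [AddCommGroup M] [AddCommGroup N] [Module R M] [Module R N]

theorem lTensor_injective_of_comp_eq_id (Q : Type*) [AddCommGroup Q] [Module R Q]
    {i : M →ₗ[R] N} {r : N →ₗ[R] M} (h : r ∘ₗ i = LinearMap.id) : Injective (i.lTensor Q) :=
  LeftInverse.injective (g := r.lTensor Q) fun x => by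
    rw [← comp_apply, ← lTensor_comp, h, lTensor_id, id_apply]

theorem exact_lTensor_subtype_ker (Q : Type*) [AddCommGroup Q] [Module R Q] (f : M →ₗ[R] N)
    (hf : Injective ((range f).subtype.lTensor Q)) :
    Exact ((ker f).subtype.lTensor Q) (f.lTensor Q) := by
  have hfac : f.lTensor Q = (range f).subtype.lTensor Q ∘ₗ f.rangeRestrict.lTensor Q := by
    rw [← lTensor_comp]
    rfl
  rw [hfac, hf.comp_exact_iff_exact]
  exact lTensor_exact Q f.exact_subtype_ker_rangeRestrict f.surjective_rangeRestrict

end LinearMap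

/-- Over a commutative Noetherian local ring `R`, if `N` is finite free
and `f : N → N` has free cokernel, then `ker f` is finite free, a direct summand of
`N`, and its formation commutes with any base change `R → S`:  the natural map
`(ker f) ⊗_R S → ker (f ⊗_R id_S)` is an isomorphism. -/
theorem statement_18 (R : Type*) [CommRing R] [IsLocalRing R]
    (N : Type*) [AddCommGroup N] [Module R N] [Module.Finite R N] [Module.Free R N]
    (f : N →ₗ[R] N)
    (hcoker : Module.Free R (N ⧸ LinearMap.range f)) :
    Module.Free R ↥(LinearMap.ker f) ∧ Module.Finite R ↥(LinearMap.ker f) ∧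
    (∃ q : Submodule R N, IsCompl (LinearMap.ker f) q) ∧
    ∀ (S : Type*) [CommRing S] [Algebra R S],
      Function.Bijective
        (LinearMap.codRestrict (LinearMap.ker (LinearMap.baseChange S f))
          (LinearMap.baseChange S (LinearMap.ker f).subtype)
          (fun x => by
            rw [LinearMap.mem_ker, ← LinearMap.comp_apply, ← LinearMap.baseChange_comp]
            have h0 : f ∘ₗ (LinearMap.ker f).subtype = 0 := by
              ext y
              simpa using y.2
            rw [h0, LinearMap.baseChange_zero, LinearMap.zero_apply])) := by
  have : Module.Projective R (N ⧸ range f) := .of_free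
  obtain ⟨rRange, hrRange⟩ := (exact_subtype_mkQ (range f)).exists_leftInverse_of_projective
    (range f).injective_subtype (range f).mkQ_surjective
  have : Module.Projective R (range f) := .of_split _ rRange hrRange
  obtain ⟨rKer, hrKer⟩ := f.exact_subtype_ker_rangeRestrict.exists_leftInverse_of_projective
    (ker f).injective_subtype f.surjective_rangeRestrict
  have : Module.Projective R (ker f) := .of_split _ rKer hrKer
  have : Module.Finite R (ker f) :=
    .of_surjective rKer (LeftInverse.surjective (LinearMap.congr_fun hrKer))
  refine ⟨Module.free_of_flat_of_isLocalRing, inferInstance,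
    ⟨ker rKer, isCompl_of_proj (LinearMap.congr_fun hrKer)⟩, fun S _ _ => ?_⟩
  refine bijective_codRestrict_ker_of_exact ?_ ?_ _
  · rw [baseChange_eq_ltensor, baseChange_eq_ltensor]
    exact exact_lTensor_subtype_ker S f (lTensor_injective_of_comp_eq_id S hrRange)
  · rw [baseChange_eq_ltensor]
    exact lTensor_injective_of_comp_eq_id S hrKer
end
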